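/- arXiv:math/0304291 — 10 statements merged into one kernel-verified Lean document; each statement's English description precedes it below -/
import Mathlib

section
/- Let f : M → N be a homomorphism of finitely generated free abelian groups. Then f is pure (i.e., N/f(M) is torsion-free) if and only if the dual homomorphism f* : Hom(N,ℤ) → Hom(M,ℤ) is pure (i.e., Hom(M,ℤ)/f*(Hom(N,ℤ)) is torsion-free). -/
/-- The dual homomorphism `f* : Hom(N,ℤ) → Hom(M,ℤ)`, given by precomposition. -/
def dualHom {M N : Type*} [AddCommGroup M] [AddCommGroup N] (f : M →+ N) :
    (N →+ ℤ) →+ (M →+ ℤ) where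
  toFun φ := φ.comp f
  map_zero' := rfl
  map_add' _ _ := rfl

/-- The old Mathlib `AddMonoid.IsTorsionFree`: no nonzero element has finite additive order. -/
def AddMonoid.IsTorsionFree (G : Type*) [AddMonoid G] : Prop :=
  ∀ g : G, g ≠ 0 → ¬IsOfFinAddOrder g

/-! If `N ⧸ f(M)` is torsion-free, it is free, so `f(M)` is a direct summand of `N`. Then every
functional on `f(M)` extends to `N`, which makes the image of `f*` the annihilator of `ker f`; the
quotient by an annihilator is torsion-free. Applying this to `f*` and identifying `f**` with `f`
(free modules of finite rank are reflexive) gives the converse. -/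

open Module LinearMap Submodule

section

variable {R M N : Type*} [CommRing R] [AddCommGroup M] [Module R M] [AddCommGroup N] [Module R N]

theorem LinearEquiv.isTorsionFree_iff (e : M ≃ₗ[R] N) :
    IsTorsionFree R M ↔ IsTorsionFree R N :=
  ⟨fun _ ↦ e.symm.injective.moduleIsTorsionFree _ (map_smul e.symm),
    fun _ ↦ e.injective.moduleIsTorsionFree _ (map_smul e)⟩

theorem Submodule.isTorsionFree_quotient_iff [IsDomain R] (p : Submodule R M) :
    IsTorsionFree R (M ⧸ p) ↔ ∀ r : R, r ≠ 0 → ∀ x : M, r • x ∈ p → x ∈ p := by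
  simp only [isTorsionFree_iff_smul_eq_zero, p.mkQ_surjective.forall, mkQ_apply,
    ← Quotient.mk_smul, Quotient.mk_eq_zero, or_iff_not_imp_left]
  exact ⟨fun h r hr x hx ↦ h r x hx hr, fun h r x hx hr ↦ h r hr x hx⟩

theorem Submodule.isTorsionFree_quotient_dualAnnihilator [IsDomain R] (W : Submodule R M) :
    IsTorsionFree R (Dual R M ⧸ W.dualAnnihilator) := by
  refine W.dualAnnihilator.isTorsionFree_quotient_iff.mpr fun r hr φ hφ ↦ ?_
  rw [mem_dualAnnihilator] at hφ ⊢
  intro w hw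
  simpa [hr] using hφ w hw

theorem Submodule.dualMap_subtype_surjective (p : Submodule R N) [Projective R (N ⧸ p)] :
    Function.Surjective p.subtype.dualMap := by
  -- a section of the projective quotient `N ⧸ p` gives a retraction `r : N → p`
  obtain ⟨s, hs⟩ := p.mkQ.exists_rightInverse_of_surjective p.range_mkQ
  have hsplit := ((exact_subtype_mkQ p).split_tfae p.injective_subtype p.mkQ_surjective).out 0 1
  obtain ⟨r, hr⟩ := hsplit.mp ⟨s, hs⟩
  refine fun φ ↦ ⟨φ ∘ₗ r, ?_⟩
  rw [dualMap_apply', comp_assoc, hr, comp_id]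

theorem LinearMap.isTorsionFree_quotient_range_dualMap [IsDomain R] (F : M →ₗ[R] N)
    [Projective R (N ⧸ range F)] : IsTorsionFree R (Dual R M ⧸ range F.dualMap) := by
  rw [range_dualMap_eq_dualAnnihilator_ker_of_subtype_range_surjective F
    (range F).dualMap_subtype_surjective]
  exact (ker F).isTorsionFree_quotient_dualAnnihilator

theorem LinearMap.range_dualMap_dualMap [IsReflexive R M] [IsReflexive R N] (F : M →ₗ[R] N) :
    (range F).map (evalEquiv R N : N →ₗ[R] Dual R (Dual R N)) = range F.dualMap.dualMap := by
  rw [evalEquiv_toLinearMap, ← range_comp, ← Dual.eval_naturality,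
    range_comp_of_range_eq_top _ (range_eq_top.mpr (bijective_dual_eval R M).surjective)]

end

section PID

variable {R M N : Type*} [CommRing R] [IsDomain R] [IsPrincipalIdealRing R]
  [AddCommGroup M] [Module R M] [Free R M] [Module.Finite R M]
  [AddCommGroup N] [Module R N] [Free R N] [Module.Finite R N]

theorem LinearMap.isTorsionFree_quotient_range_iff_dualMap (F : M →ₗ[R] N) :
    IsTorsionFree R (N ⧸ range F) ↔ IsTorsionFree R (Dual R M ⧸ range F.dualMap) := by
  refine ⟨fun _ ↦ F.isTorsionFree_quotient_range_dualMap, fun _ ↦ ?_⟩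
  rw [(Quotient.equiv _ _ (evalEquiv R N) F.range_dualMap_dualMap).isTorsionFree_iff]
  exact F.dualMap.isTorsionFree_quotient_range_dualMap

end PID

theorem AddMonoid.isTorsionFree_iff_isTorsionFree_int (G : Type*) [AddCommGroup G] :
    AddMonoid.IsTorsionFree G ↔ Module.IsTorsionFree ℤ G := by
  rw [Module.isTorsionFree_int_iff_isAddTorsionFree, isAddTorsionFree_iff_not_isOfFinAddOrder]
  rfl

theorem map_toIntSubmodule_range_dualHom {M N : Type*} [AddCommGroup M] [AddCommGroup N]
    (f : M →+ N) :
    (AddSubgroup.toIntSubmodule (dualHom f).range).map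
      (addMonoidHomLequivInt (A := M) ℤ).toLinearMap = range f.toIntLinearMap.dualMap := by
  have hcomm : (addMonoidHomLequivInt ℤ).toLinearMap ∘ₗ (dualHom f).toIntLinearMap =
      f.toIntLinearMap.dualMap ∘ₗ (addMonoidHomLequivInt (A := N) ℤ).toLinearMap := rfl
  rw [← AddMonoidHom.coe_toIntLinearMap_range, ← range_comp, hcomm,
    range_comp_of_range_eq_top _ (LinearEquiv.range _)]

theorem pure_iff_dual_pure
    (M N : Type*) [AddCommGroup M] [AddCommGroup N]
    [Module.Free ℤ M] [Module.Finite ℤ M] [Module.Free ℤ N] [Module.Finite ℤ N]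
    (f : M →+ N) :
    AddMonoid.IsTorsionFree (N ⧸ f.range) ↔
      AddMonoid.IsTorsionFree ((M →+ ℤ) ⧸ (dualHom f).range) := by
  rw [AddMonoid.isTorsionFree_iff_isTorsionFree_int, AddMonoid.isTorsionFree_iff_isTorsionFree_int]
  exact f.toIntLinearMap.isTorsionFree_quotient_range_iff_dualMap.trans
    (Quotient.equiv _ _ _ (map_toIntSubmodule_range_dualHom f)).isTorsionFree_iff.symm
end

section
/- Let M be a free abelian group of finite rank and let S, S' be pure subgroups of M with S + S' pure. Define S^⊥ = {p ∈ Hom(M,ℤ) : p(s) = 0 for all s ∈ S} and similarly S'^⊥. Then S^⊥ + S'^⊥ is a pure subgroup of Hom(M,ℤ). -/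
/-- The annihilator `S^⊥ = {p ∈ Hom(M,ℤ) : p(s) = 0 for all s ∈ S}`. -/
def annihilator {M : Type*} [AddCommGroup M] (S : AddSubgroup M) :
    AddSubgroup (M →+ ℤ) where
  carrier := {p | ∀ s ∈ S, p s = 0}
  zero_mem' := by intro s _; rfl
  add_mem' := by
    intro p q hp hq s hs
    simp [hp s hs, hq s hs]
  neg_mem' := by
    intro p hp s hs
    simp [hp s hs]

/-!
A functional `p` in `S^⊥ + S'^⊥` vanishes on `S ∩ S'`, and conversely when `S + S'` is a
direct summand of `M`: then `s + s' ↦ p s` is well defined on `S + S'` and extends to some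
`q : M →+ ℤ`, so that `p = (p - q) + q` with `p - q ∈ S^⊥` and `q ∈ S'^⊥`. Purity of `S + S'`
makes it a direct summand, so `S^⊥ + S'^⊥ = (S ∩ S')^⊥`, and an annihilator is always pure
because `ℤ` is torsion-free.
-/

theorem Submodule.exists_extend_of_projective_quotient {R M P : Type*} [Ring R]
    [AddCommGroup M] [Module R M] [AddCommGroup P] [Module R P]
    (N : Submodule R M) [Module.Projective R (M ⧸ N)] (f : N →ₗ[R] P) :
    ∃ g : M →ₗ[R] P, ∀ x : N, g x = f x := by
  obtain ⟨s, hs⟩ := N.mkQ.exists_rightInverse_of_surjective N.range_mkQ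
  have hmem : ∀ x, x - s (N.mkQ x) ∈ N := fun x => by
    rw [← Submodule.Quotient.mk_eq_zero, ← N.mkQ_apply, map_sub, ← LinearMap.comp_apply, hs,
      LinearMap.id_apply, sub_self]
  refine ⟨f ∘ₗ (LinearMap.id - s ∘ₗ N.mkQ).codRestrict N hmem, fun x => ?_⟩
  have hx : N.mkQ x = 0 := (Submodule.Quotient.mk_eq_zero N).mpr x.2
  have hπx : (LinearMap.id - s ∘ₗ N.mkQ).codRestrict N hmem x = x := Subtype.ext (by simp [hx])
  rw [LinearMap.comp_apply, hπx]

theorem LinearMap.exists_eq_on_left_eq_zero_on_right {R M P : Type*} [Ring R]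
    [AddCommGroup M] [Module R M] [AddCommGroup P] [Module R P]
    {N₁ N₂ : Submodule R M} [Module.Projective R (M ⧸ (N₁ ⊔ N₂))] (p : M →ₗ[R] P)
    (hp : ∀ x ∈ N₁ ⊓ N₂, p x = 0) :
    ∃ q : M →ₗ[R] P, (∀ x ∈ N₁, q x = p x) ∧ ∀ x ∈ N₂, q x = 0 := by
  let f : M →ₗ.[R] P := ⟨N₁, p ∘ₗ N₁.subtype⟩
  let g : M →ₗ.[R] P := ⟨N₂, 0⟩
  have hfg : ∀ (x : f.domain) (y : g.domain), (x : M) = y → f x = g y := fun x y hxy =>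
    hp x ⟨x.2, hxy ▸ y.2⟩
  obtain ⟨q, hq⟩ := (N₁ ⊔ N₂).exists_extend_of_projective_quotient (f.sup g hfg).toFun
  refine ⟨q, fun x hx => ?_, fun x hx => ?_⟩
  · exact (hq ⟨x, Submodule.mem_sup_left hx⟩).trans
      ((f.left_le_sup g hfg).2 (x := ⟨x, hx⟩) rfl).symm
  · exact (hq ⟨x, Submodule.mem_sup_right hx⟩).trans
      ((f.right_le_sup g hfg).2 (x := ⟨x, hx⟩) rfl).symm

theorem AddMonoid.IsTorsionFree.noZeroSMulDivisors_int {G : Type*} [AddCommGroup G]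
    (h : AddMonoid.IsTorsionFree G) : NoZeroSMulDivisors ℤ G where
  eq_zero_or_eq_zero_of_smul_eq_zero {n g} hng := by
    by_contra! hc
    exact h g hc.2 (isOfFinAddOrder_iff_zsmul_eq_zero.mpr ⟨n, hc.1, hng⟩)

theorem AddMonoid.isTorsionFree_quotient_iff {G : Type*} [AddCommGroup G] (K : AddSubgroup G) :
    AddMonoid.IsTorsionFree (G ⧸ K) ↔ ∀ n : ℤ, n ≠ 0 → ∀ g : G, n • g ∈ K → g ∈ K := by
  simp only [AddMonoid.IsTorsionFree, QuotientAddGroup.mk_surjective.forall,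
    isOfFinAddOrder_iff_zsmul_eq_zero, ← QuotientAddGroup.mk_zsmul, ne_eq,
    QuotientAddGroup.eq_zero_iff]
  grind

section

variable {M : Type*} [AddCommGroup M]

@[simp]
theorem mem_annihilator {T : AddSubgroup M} {p : M →+ ℤ} : p ∈ annihilator T ↔ ∀ s ∈ T, p s = 0 :=
  Iff.rfl

theorem zsmul_mem_annihilator_iff {T : AddSubgroup M} {n : ℤ} (hn : n ≠ 0) {p : M →+ ℤ} :
    n • p ∈ annihilator T ↔ p ∈ annihilator T := by
  simp [hn]

theorem annihilator_sup_le_annihilator_inf (S S' : AddSubgroup M) :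
    annihilator S ⊔ annihilator S' ≤ annihilator (S ⊓ S') :=
  sup_le (fun _ hp x hx => hp x hx.1) (fun _ hp x hx => hp x hx.2)

theorem annihilator_sup_eq_annihilator_inf [Module.Finite ℤ M] {S S' : AddSubgroup M}
    (hsum : AddMonoid.IsTorsionFree (M ⧸ (S ⊔ S'))) :
    annihilator S ⊔ annihilator S' = annihilator (S ⊓ S') := by
  refine (annihilator_sup_le_annihilator_inf S S').antisymm fun p hp => ?_
  -- a finitely generated torsion-free `ℤ`-module is free, so this makes the quotient projective
  have : NoZeroSMulDivisors ℤ (M ⧸ (S.toIntSubmodule ⊔ S'.toIntSubmodule)) := by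
    rw [← map_sup]
    exact hsum.noZeroSMulDivisors_int
  obtain ⟨q, hqS, hqS'⟩ := p.toIntLinearMap.exists_eq_on_left_eq_zero_on_right
    (N₁ := S.toIntSubmodule) (N₂ := S'.toIntSubmodule) (fun x hx => hp x hx)
  refine AddSubgroup.mem_sup.mpr ⟨p - q.toAddMonoidHom, fun x hx => ?_, q.toAddMonoidHom, hqS', ?_⟩
  · simp [hqS x hx]
  · simp

end

theorem annihilator_sum_pure_general
    (M : Type*) [AddCommGroup M] [Module.Finite ℤ M]
    (S S' : AddSubgroup M)
    (hsum : AddMonoid.IsTorsionFree (M ⧸ (S ⊔ S'))) :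
    AddMonoid.IsTorsionFree ((M →+ ℤ) ⧸ (annihilator S ⊔ annihilator S')) := by
  rw [AddMonoid.isTorsionFree_quotient_iff, annihilator_sup_eq_annihilator_inf hsum]
  exact fun _ hn _ => (zsmul_mem_annihilator_iff hn).mp

theorem annihilator_sum_pure
    (M : Type*) [AddCommGroup M] [Module.Free ℤ M] [Module.Finite ℤ M]
    (S S' : AddSubgroup M)
    (hS : AddMonoid.IsTorsionFree (M ⧸ S))
    (hS' : AddMonoid.IsTorsionFree (M ⧸ S'))
    (hsum : AddMonoid.IsTorsionFree (M ⧸ (S ⊔ S'))) :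
    AddMonoid.IsTorsionFree ((M →+ ℤ) ⧸ (annihilator S ⊔ annihilator S')) :=
  annihilator_sum_pure_general M S S' hsum
end

section
/- Any pure system in a finite-dimensional rational vector space is a finite set. More precisely: any family of pure subgroups of a free abelian group M of finite rank n such that the sum of any two members is pure has cardinality at most 2^n (in fact at most the number of subspaces of (ℤ/2)^n). -/
/-!
Reduction mod 2 sends a subgroup `S ≤ ℤⁿ` to its image in `𝔽₂ⁿ`. Let `A`, `B` be pure with `A + B`
pure and with the same image. Each `b ∈ B` is then `a + 2m` with `a ∈ A` and `2m ∈ A + B`, so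
`m ∈ A + B` by purity; hence `A + B = A + 2(A + B)`. Since `(A + B)/A` is finitely generated and
torsion-free, Nakayama's lemma for `2ℤ` forces `A + B = A`, i.e. `B ≤ A`. So reduction mod 2 is
injective on a pure system.
-/

open scoped Pointwise

namespace AddSubgroup

variable {M : Type*} [AddCommGroup M]

lemma mem_of_zsmul_mem {S : AddSubgroup M} [IsAddTorsionFree (M ⧸ S)] {k : ℤ} (hk : k ≠ 0)
    {m : M} (h : k • m ∈ S) : m ∈ S := by
  rw [← QuotientAddGroup.eq_zero_iff] at h ⊢
  rw [QuotientAddGroup.mk_zsmul] at h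
  exact (smul_eq_zero.mp h).resolve_left hk

lemma le_of_le_sup_two_smul [Module.Finite ℤ M] {S T : AddSubgroup M} [IsAddTorsionFree (M ⧸ S)]
    (h : T ≤ S ⊔ (2 : ℤ) • T) : T ≤ S := by
  have hle : toIntSubmodule T ≤ toIntSubmodule S ⊔ Ideal.span {(2 : ℤ)} • toIntSubmodule T := by
    intro t ht
    obtain ⟨s, hs, _, h2t, rfl⟩ := mem_sup.mp (h ht)
    obtain ⟨t', ht', rfl⟩ := (mem_smul_pointwise_iff_exists _ _ _).mp h2t
    exact Submodule.add_mem_sup hs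
      (Submodule.smul_mem_smul (Ideal.mem_span_singleton_self 2) ht')
  obtain ⟨r, hr, hrT⟩ := Submodule.exists_sub_one_mem_and_smul_le_of_fg_of_le_sup
    (IsNoetherian.noetherian _) le_rfl hle
  have hr0 : r ≠ 0 := by
    rintro rfl
    obtain ⟨k, hk⟩ := Ideal.mem_span_singleton'.mp hr
    omega
  exact fun t ht => mem_of_zsmul_mem hr0 (hrT (Submodule.smul_mem_pointwise_smul t r _ ht))

variable {N : Type*} [AddCommGroup N] [Module.Finite ℤ M]

lemma le_of_map_le_map {f : M →+ N} (hf : f.ker ≤ (2 : ℤ) • ⊤) {A B : AddSubgroup M}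
    [IsAddTorsionFree (M ⧸ A)] [IsAddTorsionFree (M ⧸ (A ⊔ B))] (h : B.map f ≤ A.map f) :
    B ≤ A := by
  suffices A ⊔ B ≤ A from le_sup_right.trans this
  refine le_of_le_sup_two_smul (sup_le le_sup_left fun b hb => ?_)
  obtain ⟨a, ha, hab⟩ := h (mem_map_of_mem f hb)
  obtain ⟨m, -, hm⟩ := (mem_smul_pointwise_iff_exists _ _ _).mp
    (hf (show b - a ∈ f.ker by simp [hab]))
  have hmAB : m ∈ A ⊔ B := mem_of_zsmul_mem two_ne_zero
    (hm ▸ sub_mem (mem_sup_right hb) (mem_sup_left ha))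
  rw [show b = a + (2 : ℤ) • m by rw [hm]; abel]
  exact add_mem_sup ha (smul_mem_pointwise_smul _ _ _ hmAB)

lemma injOn_map {f : M →+ N} (hf : f.ker ≤ (2 : ℤ) • ⊤) {𝒰 : Set (AddSubgroup M)}
    (hpure : ∀ S ∈ 𝒰, IsAddTorsionFree (M ⧸ S))
    (hsum : ∀ S ∈ 𝒰, ∀ S' ∈ 𝒰, IsAddTorsionFree (M ⧸ (S ⊔ S'))) :
    Set.InjOn (map f) 𝒰 := fun A hA B hB h =>
  have := hpure A hA; have := hpure B hB; have := hsum A hA B hB; have := hsum B hB A hA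
  le_antisymm (le_of_map_le_map hf h.le) (le_of_map_le_map hf h.ge)

end AddSubgroup

lemma AddMonoidHom.ker_compLeft_intCastAddHom_le (ι : Type*) (p : ℕ) :
    ((Int.castAddHom (ZMod p)).compLeft ι).ker ≤ (p : ℤ) • ⊤ := by
  intro m hm
  refine (AddSubgroup.mem_smul_pointwise_iff_exists _ _ _).mpr ⟨fun i => m i / p, trivial, ?_⟩
  funext i
  have : (m i : ZMod p) = 0 := congrFun hm i
  exact Int.mul_ediv_cancel' ((ZMod.intCast_zmod_eq_zero_iff_dvd _ p).mp this)

theorem pure_system_finite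
    (n : ℕ) (𝒰 : Set (AddSubgroup (Fin n → ℤ)))
    (hpure : ∀ S ∈ 𝒰, ∀ g : (Fin n → ℤ) ⧸ S, g ≠ 0 → ¬IsOfFinAddOrder g)
    (hsum : ∀ S ∈ 𝒰, ∀ S' ∈ 𝒰, ∀ g : (Fin n → ℤ) ⧸ (S ⊔ S'), g ≠ 0 → ¬IsOfFinAddOrder g) :
    𝒰.Finite ∧ Nat.card 𝒰 ≤ Nat.card (Submodule (ZMod 2) (Fin n → ZMod 2)) := by
  have hker : ((Int.castAddHom (ZMod 2)).compLeft (Fin n)).ker ≤ (2 : ℤ) • ⊤ := by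
    simpa using AddMonoidHom.ker_compLeft_intCastAddHom_le (Fin n) 2
  have hinj : Set.InjOn (AddSubgroup.map ((Int.castAddHom (ZMod 2)).compLeft (Fin n))) 𝒰 :=
    AddSubgroup.injOn_map hker
      (fun S hS => isAddTorsionFree_iff_not_isOfFinAddOrder.mpr (hpure S hS))
      (fun S hS S' hS' => isAddTorsionFree_iff_not_isOfFinAddOrder.mpr (hsum S hS S' hS'))
  have hmod2 := Set.injOn_iff_injective.mp
    ((AddSubgroup.toZModSubmodule 2).injective.comp_injOn hinj)
  exact ⟨Set.finite_coe_iff.mp (Finite.of_injective _ hmod2),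
    Nat.card_le_card_of_injective _ hmod2⟩
end

section
/- If S and S' are distinct pure subgroups of a free abelian group M of finite rank and S + S' is pure, then the images S ⊗ 𝔽₂ and S' ⊗ 𝔽₂ in M ⊗ 𝔽₂ are distinct. -/
/-!
Suppose `S` and `S'` have the same image mod 2, and let `s ∈ S`. Then `s = s' + 2y` with
`s' ∈ S'`, and `y ∈ S + S'` because `S + S'` is pure; writing `y = a + a'` gives
`s ≡ 2a (mod S')`. So the image `N` of `S` in `M/S'` satisfies `N = 2N`. As `N` is finitely
generated, Nakayama gives an odd `r` with `rN = 0`, and `N = 0` because `M/S'` is torsion-free.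
Hence `S ⊆ S'`, and symmetrically `S' ⊆ S`.
-/

open Submodule

namespace Submodule

variable {R M : Type*} [CommRing R] [IsDomain R] [AddCommGroup M] [Module R M]

theorem eq_bot_of_fg_of_le_smul [Module.IsTorsionFree R M] {I : Ideal R} (hI : I ≠ ⊤)
    {N : Submodule R M} (hN : N.FG) (hle : N ≤ I • N) : N = ⊥ := by
  obtain ⟨r, hr1, hr⟩ := exists_sub_one_mem_and_smul_eq_zero_of_fg_of_le_smul I N hN hle
  have hr0 : r ≠ 0 := by
    rintro rfl
    exact hI ((Ideal.eq_top_iff_one I).2 (by simpa using I.neg_mem hr1))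
  exact eq_bot_iff.2 fun x hx => (mem_bot R).2 ((smul_eq_zero.1 (hr x hx)).resolve_left hr0)

theorem mem_of_smul_mem {T : Submodule R M} [Module.IsTorsionFree R (M ⧸ T)] {k : R}
    (hk : k ≠ 0) {y : M} (h : k • y ∈ T) : y ∈ T := by
  rw [← Quotient.mk_eq_zero, Quotient.mk_smul] at h
  exact (Quotient.mk_eq_zero T).1 ((smul_eq_zero.1 h).resolve_left hk)

theorem exists_mem_sub_smul_mem {S S' : Submodule R M} [Module.IsTorsionFree R (M ⧸ (S ⊔ S'))]
    {k : R} (hk : k ≠ 0) {s s' y : M} (hs : s ∈ S) (hs' : s' ∈ S') (hy : s = s' + k • y) :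
    ∃ a ∈ S, s - k • a ∈ S' := by
  have hyS : y ∈ S ⊔ S' := by
    refine mem_of_smul_mem hk ?_
    rw [eq_sub_of_add_eq' hy.symm]
    exact sub_mem (mem_sup_left hs) (mem_sup_right hs')
  obtain ⟨a, ha, a', ha', rfl⟩ := mem_sup.1 hyS
  have hsa : s - k • a = s' + k • a' := by rw [hy]; module
  exact ⟨a, ha, hsa ▸ add_mem hs' (S'.smul_mem k ha')⟩

theorem le_of_forall_mem_eq_add_smul [IsNoetherian R M] {S S' : Submodule R M}
    [Module.IsTorsionFree R (M ⧸ S')] [Module.IsTorsionFree R (M ⧸ (S ⊔ S'))] {k : R}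
    (hk0 : k ≠ 0) (hk : ¬IsUnit k) (h : ∀ s ∈ S, ∃ s' ∈ S', ∃ y, s = s' + k • y) : S ≤ S' := by
  set N := S.map S'.mkQ
  have hle : N ≤ Ideal.span {k} • N := by
    rintro _ ⟨s, hs, rfl⟩
    obtain ⟨s', hs', y, hy⟩ := h s hs
    obtain ⟨a, ha, hsa⟩ := exists_mem_sub_smul_mem hk0 hs hs' hy
    have hsa' : S'.mkQ s = k • S'.mkQ a := by
      rw [← map_smul, ← sub_eq_zero, ← map_sub]
      exact (Quotient.mk_eq_zero S').2 hsa
    rw [hsa']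
    exact smul_mem_smul (Ideal.mem_span_singleton_self k) (mem_map_of_mem ha)
  have hI : Ideal.span {k} ≠ ⊤ := by rwa [Ne, Ideal.span_singleton_eq_top]
  have hN : N = ⊥ := eq_bot_of_fg_of_le_smul hI ((IsNoetherian.noetherian S).map _) hle
  simpa using LinearMap.le_ker_iff_map.2 hN

end Submodule

theorem Pi.exists_eq_add_smul_of_intCast_eq {ι : Type*} {m : ℕ} {x x' : ι → ℤ}
    (h : (fun i => (x i : ZMod m)) = fun i => (x' i : ZMod m)) :
    ∃ y, x = x' + (m : ℤ) • y := by
  choose y hy using fun i =>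
    (ZMod.intCast_eq_intCast_iff_dvd_sub (x' i) (x i) m).1 (congrFun h i).symm
  refine ⟨y, funext fun i => ?_⟩
  simp only [Pi.add_apply, Pi.smul_apply, smul_eq_mul]
  linarith [hy i]

theorem Submodule.le_of_image_intCast_zmod_subset {ι : Type*} [Finite ι] {m : ℕ} (hm : 1 < m)
    {S S' : Submodule ℤ (ι → ℤ)} [IsAddTorsionFree ((ι → ℤ) ⧸ S')]
    [IsAddTorsionFree ((ι → ℤ) ⧸ (S ⊔ S'))]
    (h : (fun (x : ι → ℤ) (i : ι) => (x i : ZMod m)) '' S ⊆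
      (fun (x : ι → ℤ) (i : ι) => (x i : ZMod m)) '' S') :
    S ≤ S' := by
  refine le_of_forall_mem_eq_add_smul (k := (m : ℤ)) (by omega) ?_ fun s hs => ?_
  · rw [Int.isUnit_iff]
    omega
  obtain ⟨s', hs', hss'⟩ := h ⟨s, hs, rfl⟩
  obtain ⟨y, hy⟩ := Pi.exists_eq_add_smul_of_intCast_eq hss'.symm
  exact ⟨s', hs', y, hy⟩

theorem mod_two_images_distinct_of_pure
    (n : ℕ) (S S' : Submodule ℤ (Fin n → ℤ))
    (hS : ∀ g : (Fin n → ℤ) ⧸ S, g ≠ 0 → ¬IsOfFinAddOrder g)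
    (hS' : ∀ g : (Fin n → ℤ) ⧸ S', g ≠ 0 → ¬IsOfFinAddOrder g)
    (hsum : ∀ g : (Fin n → ℤ) ⧸ (S ⊔ S'), g ≠ 0 → ¬IsOfFinAddOrder g)
    (hne : S ≠ S') :
    (fun (x : Fin n → ℤ) (i : Fin n) => ((x i : ℤ) : ZMod 2)) '' (S : Set (Fin n → ℤ)) ≠
      (fun (x : Fin n → ℤ) (i : Fin n) => ((x i : ℤ) : ZMod 2)) '' (S' : Set (Fin n → ℤ)) := by
  have := IsAddTorsionFree.of_not_isOfFinAddOrder hS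
  have := IsAddTorsionFree.of_not_isOfFinAddOrder hS'
  have := IsAddTorsionFree.of_not_isOfFinAddOrder hsum
  have : IsAddTorsionFree ((Fin n → ℤ) ⧸ (S' ⊔ S)) := sup_comm S S' ▸ this
  intro h
  exact hne (le_antisymm (le_of_image_intCast_zmod_subset one_lt_two h.le)
    (le_of_image_intCast_zmod_subset one_lt_two h.ge))
end

section
/- Let X, Y ⊆ ℤⁿ be such that X - Y is pseudo-convex (i.e., equals the set of integer points of its convex hull, which is a polyhedron). If X and Y are disjoint, then there exists a linear functional p : ℝⁿ → ℝ such that p(x) > p(y) for all x ∈ X, y ∈ Y. -/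
open Pointwise

/-- The canonical embedding of the integer lattice into `ℝⁿ`. -/
def intCast {n : ℕ} (m : Fin n → ℤ) : Fin n → ℝ := fun i => (m i : ℝ)

/-- A polyhedron: the intersection of finitely many closed halfspaces. -/
def IsPolyhedron {n : ℕ} (P : Set (Fin n → ℝ)) : Prop :=
  ∃ s : Finset ((Fin n → ℝ) × ℝ),
    P = {x | ∀ q ∈ s, ∑ i, q.1 i * x i ≤ q.2}

/-- A set of integer points is pseudo-convex if it is the set of integer points of its
convex hull, and this convex hull is a polyhedron. -/
def PseudoConvex {n : ℕ} (X : Set (Fin n → ℤ)) : Prop :=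
  IsPolyhedron (convexHull ℝ (intCast '' X)) ∧
    ∀ m : Fin n → ℤ, intCast m ∈ convexHull ℝ (intCast '' X) → m ∈ X

theorem separation_of_disjoint
    (n : ℕ) (X Y : Set (Fin n → ℤ))
    (hXY : PseudoConvex (X - Y))
    (hdisj : Disjoint X Y) :
    ∃ p : (Fin n → ℝ) →ₗ[ℝ] ℝ, ∀ x ∈ X, ∀ y ∈ Y, p (intCast x) > p (intCast y) := by
  obtain ⟨⟨s, hs⟩, hint⟩ := hXY
  -- 0 is not in the convex hull
  have h0 : (0 : Fin n → ℝ) ∉ convexHull ℝ (intCast '' (X - Y)) := by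
    intro h
    have hz : intCast (0 : Fin n → ℤ) = (0 : Fin n → ℝ) := by
      funext i; simp [intCast]
    have : (0 : Fin n → ℤ) ∈ X - Y := hint 0 (by rw [hz]; exact h)
    obtain ⟨x, hx, y, hy, hxy⟩ := this
    have : x = y := by
      have := sub_eq_zero.mp hxy
      exact this
    exact absurd hy (Set.disjoint_left.mp hdisj (this ▸ hx))
  rw [hs] at h0
  simp only [Set.mem_setOf_eq, not_forall] at h0
  obtain ⟨q, hq, hq0⟩ := h0
  have hq2 : q.2 < 0 := by
    push_neg at hq0
    simpa using hq0
  -- the separating functional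
  set p : (Fin n → ℝ) →ₗ[ℝ] ℝ :=
    ∑ i, q.1 i • (LinearMap.proj i : (Fin n → ℝ) →ₗ[ℝ] ℝ) with hp
  have hpz : ∀ z, p z = ∑ i, q.1 i * z i := by
    intro z
    simp [hp, LinearMap.sum_apply]
  refine ⟨-p, ?_⟩
  intro x hx y hy
  have hmem : intCast x - intCast y ∈ convexHull ℝ (intCast '' (X - Y)) := by
    apply subset_convexHull
    refine ⟨x - y, ⟨x, hx, y, hy, rfl⟩, ?_⟩
    funext i; simp [intCast]
  rw [hs] at hmem
  have := hmem q hq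

  have hkey : p (intCast x - intCast y) ≤ q.2 := by rw [hpz]; exact this
  have : p (intCast x) - p (intCast y) < 0 := by
    rw [← map_sub]; exact lt_of_le_of_lt hkey hq2
  simp only [LinearMap.neg_apply, gt_iff_lt, neg_lt_neg_iff]
  linarith
end

section
/- Let X ⊆ ℤⁿ be a subset such that for every positive integer n the n-fold Minkowski sum [n]X = X + ⋯ + X is pseudo-convex. Then the subgroup ℤ(X - X) generated by all differences x - x' (x, x' ∈ X) is a pure subgroup of ℤⁿ. -/
open Pointwise

/-- The `k`-fold Minkowski sum `[k]X = X + ⋯ + X`. -/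
def iterSum {n : ℕ} (X : Set (Fin n → ℤ)) : ℕ → Set (Fin n → ℤ)
  | 0 => X
  | k + 1 => iterSum X k + X

/-!
If `m • g = a - b` with `a, b ∈ [k]X`, then `b + g = b + (1/m)(a - b)` is a lattice point of the
segment `[b, a] ⊆ conv([k]X)`, hence lies in `[k]X` by pseudo-convexity, and so
`g = (b + g) - b ∈ ℤ(X - X)`. Every element of `ℤ(X - X)` is such a difference `a - b`, because
`[k]X + [k']X ⊆ [k + k' + 1]X` (in the indexing of `iterSum`) makes the union of the sets
`[k]X - [k]X` closed under addition.
-/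

theorem isTorsionFree_quotient_of_nsmul_mem {G : Type*} [AddCommGroup G] (S : AddSubgroup G)
    (hS : ∀ (m : ℕ) (g : G), 0 < m → m • g ∈ S → g ∈ S) :
    AddMonoid.IsTorsionFree (G ⧸ S) := by
  intro x hx hfin
  obtain ⟨m, hm, hmx⟩ := isOfFinAddOrder_iff_nsmul_eq_zero.mp hfin
  induction x using QuotientAddGroup.induction_on with
  | H g =>
    rw [← QuotientAddGroup.mk_nsmul, QuotientAddGroup.eq_zero_iff] at hmx
    exact hx ((QuotientAddGroup.eq_zero_iff g).mpr (hS m g hm hmx))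

theorem add_mem_of_nsmul_eq_sub {n : ℕ} {Y : Set (Fin n → ℤ)}
    (hY : ∀ p : Fin n → ℤ, intCast p ∈ convexHull ℝ (intCast '' Y) → p ∈ Y)
    {a b g : Fin n → ℤ} (ha : a ∈ Y) (hb : b ∈ Y) {m : ℕ} (hm : 0 < m) (hg : m • g = a - b) :
    b + g ∈ Y := by
  apply hY
  have hmR : (m : ℝ) ≠ 0 := by exact_mod_cast hm.ne'
  have on_segment : intCast (b + g) = intCast b + (m : ℝ)⁻¹ • (intCast a - intCast b) := by
    funext i
    have hgi : (m : ℝ) * g i = a i - b i := by exact_mod_cast by simpa using congrFun hg i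
    simp only [intCast, Pi.add_apply, Pi.smul_apply, Pi.sub_apply, smul_eq_mul, Int.cast_add]
    rw [← hgi, inv_mul_cancel_left₀ hmR]
  rw [on_segment]
  exact (convex_convexHull ℝ _).add_smul_sub_mem
    (subset_convexHull ℝ _ (Set.mem_image_of_mem intCast hb))
    (subset_convexHull ℝ _ (Set.mem_image_of_mem intCast ha))
    ⟨by positivity, inv_le_one_of_one_le₀ (by exact_mod_cast hm)⟩

section iterSum

variable {n : ℕ} (X : Set (Fin n → ℤ))

theorem iterSum_add_iterSum_subset (k k' : ℕ) :
    iterSum X k + iterSum X k' ⊆ iterSum X (k + k' + 1) := by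
  induction k' with
  | zero => rfl
  | succ k' ih =>
    rw [iterSum, ← add_assoc]
    exact Set.add_subset_add_right ih

theorem iterSum_sub_iterSum_subset_closure (k : ℕ) :
    iterSum X k - iterSum X k ⊆ AddSubgroup.closure (X - X) := by
  induction k with
  | zero => exact AddSubgroup.subset_closure
  | succ k ih =>
    rintro _ ⟨_, ⟨a, ha, x, hx, rfl⟩, _, ⟨b, hb, y, hy, rfl⟩, rfl⟩
    show a + x - (b + y) ∈ _
    rw [add_sub_add_comm]
    exact add_mem (ih (Set.sub_mem_sub ha hb))
      (AddSubgroup.subset_closure (Set.sub_mem_sub hx hy))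

variable {X}

theorem exists_mem_iterSum_sub_iterSum_of_mem_closure (hX : X.Nonempty) {s : Fin n → ℤ}
    (hs : s ∈ AddSubgroup.closure (X - X)) : ∃ k, s ∈ iterSum X k - iterSum X k := by
  induction hs using AddSubgroup.closure_induction with
  | mem s hs => exact ⟨0, hs⟩
  | zero =>
    obtain ⟨x, hx⟩ := hX
    exact ⟨0, x, hx, x, hx, sub_self x⟩
  | add s t _ _ ihs iht =>
    obtain ⟨k, a, ha, b, hb, rfl⟩ := ihs
    obtain ⟨k', a', ha', b', hb', rfl⟩ := iht
    exact ⟨k + k' + 1, a + a', iterSum_add_iterSum_subset X k k' (Set.add_mem_add ha ha'),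
      b + b', iterSum_add_iterSum_subset X k k' (Set.add_mem_add hb hb'), add_sub_add_comm ..⟩
  | neg s _ ihs =>
    obtain ⟨k, a, ha, b, hb, rfl⟩ := ihs
    exact ⟨k, b, hb, a, ha, (neg_sub a b).symm⟩

theorem mem_closure_sub_of_nsmul_mem
    (hX : ∀ k, ∀ p : Fin n → ℤ, intCast p ∈ convexHull ℝ (intCast '' iterSum X k) →
      p ∈ iterSum X k)
    {m : ℕ} (hm : 0 < m) {g : Fin n → ℤ} (hg : m • g ∈ AddSubgroup.closure (X - X)) :
    g ∈ AddSubgroup.closure (X - X) := by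
  rcases X.eq_empty_or_nonempty with rfl | hne
  · simp only [Set.empty_sub, AddSubgroup.closure_empty, AddSubgroup.mem_bot] at hg ⊢
    exact nsmul_right_injective hm.ne' (hg.trans (nsmul_zero m).symm)
  · obtain ⟨k, a, ha, b, hb, hab⟩ := exists_mem_iterSum_sub_iterSum_of_mem_closure hne hg
    have hbg := add_mem_of_nsmul_eq_sub (hX k) ha hb hm hab.symm
    simpa using iterSum_sub_iterSum_subset_closure X k (Set.sub_mem_sub hbg hb)

end iterSum

theorem diff_group_pure_of_iterated_sums_pseudoConvex
    (n : ℕ) (X : Set (Fin n → ℤ))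
    (h : ∀ k : ℕ, PseudoConvex (iterSum X k)) :
    AddMonoid.IsTorsionFree ((Fin n → ℤ) ⧸ AddSubgroup.closure (X - X)) :=
  isTorsionFree_quotient_of_nsmul_mem _ fun _ _ hm =>
    mem_closure_sub_of_nsmul_mem (fun k => (h k).2) hm
end

section
/- Let L and L' be rational linear subspaces of ℝⁿ that are mutually pure, i.e., L(ℤ) + L'(ℤ) is a pure subgroup of ℤⁿ, where L(ℤ) = L ∩ ℤⁿ. Let m ∈ ℤⁿ. If L ∩ (L' + m) is nonempty, then it contains an integer point. -/
/-- The canonical embedding of the integer lattice into `ℝⁿ`, as a homomorphism. -/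
def intCastHom (n : ℕ) : (Fin n → ℤ) →+ (Fin n → ℝ) where
  toFun m := fun i => (m i : ℝ)
  map_zero' := by funext i; simp
  map_add' x y := by funext i; push_cast; simp

/-- The subgroup of integer points of a subspace `L ⊆ ℝⁿ`. -/
def latticePoints {n : ℕ} (L : Submodule ℝ (Fin n → ℝ)) : AddSubgroup (Fin n → ℤ) :=
  L.toAddSubgroup.comap (intCastHom n)

/-- A subspace is rational if it is spanned by its integer points. -/
def IsRationalSubspace {n : ℕ} (L : Submodule ℝ (Fin n → ℝ)) : Prop :=
  L = Submodule.span ℝ (intCastHom n '' (latticePoints L : Set (Fin n → ℤ)))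

/-!
Let `S = L(ℤ) + L'(ℤ)`. Since `L` and `L'` are rational, both lie in the real span of `S`, hence
so does `m = v - (v - m)` for any `v ∈ L ∩ (L' + m)`. An integer vector in the real span of a
subgroup `S ≤ ℤⁿ` has a nonzero multiple in `S`: otherwise it could be adjoined to a maximal
independent family of `S`, and linear independence over `ℤ` persists over `ℝ`. Purity then puts
`m` itself in `S`, say `m = z + w` with `z ∈ L(ℤ)`, `w ∈ L'(ℤ)`, and `z` is the integer point.
-/

open Submodule

section ExtensionOfScalars

variable {R K ι : Type*} [CommRing R] [Field K] [Algebra R K] [FaithfulSMul R K]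

theorem LinearIndepOn.pi_algebraMap [Finite ι] {B : Set (ι → R)} (hB : LinearIndepOn R id B) :
    LinearIndepOn K (Pi.algebraMap ι R K) B :=
  linearIndependent_algebraMap_comp_iff.mpr hB

theorem exists_smul_mem_span_of_algebraMap_mem_span [Finite ι] {B : Set (ι → R)}
    (hB : LinearIndepOn R id B) {m : ι → R}
    (hm : Pi.algebraMap ι R K m ∈ span K (Pi.algebraMap ι R K '' B)) :
    ∃ a : R, a ≠ 0 ∧ a • m ∈ span R B := by
  by_contra! h
  have : Nontrivial R := (algebraMap R K).domain_nontrivial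
  have hmB : m ∉ B := fun hmB ↦ h 1 one_ne_zero (by simpa using subset_span hmB)
  have hind : LinearIndepOn R id (insert m B) :=
    hB.id_insert' fun a ha ↦ by_contra fun ha0 ↦ h a ha0 ha
  exact hind.pi_algebraMap.notMem_span_of_insert hmB hm

theorem algebraMap_mem_span_of_smul_mem_span {s : Set (ι → R)} {a : R} (ha : a ≠ 0)
    {y : ι → R} (hy : a • y ∈ span R s) :
    Pi.algebraMap ι R K y ∈ span K (Pi.algebraMap ι R K '' s) := by
  have hay : Pi.algebraMap ι R K (a • y) ∈ span K (Pi.algebraMap ι R K '' s) :=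
    span_le_restrictScalars R K _ (map_span (Pi.algebraMap ι R K) s ▸ mem_map_of_mem hy)
  rw [map_smul, ← algebraMap_smul K] at hay
  exact (smul_mem_iff _ ((map_ne_zero_iff _ (FaithfulSMul.algebraMap_injective R K)).mpr ha)).mp hay

theorem exists_smul_mem_of_algebraMap_mem_span [Finite ι] (S : Submodule R (ι → R))
    {m : ι → R} (hm : Pi.algebraMap ι R K m ∈ span K (Pi.algebraMap ι R K '' S)) :
    ∃ a : R, a ≠ 0 ∧ a • m ∈ S := by
  obtain ⟨B, hB, hBmax⟩ := exists_maximal_linearIndepOn R (Subtype.val : S → ι → R)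
  have hS : span K (Pi.algebraMap ι R K '' S) ≤
      span K (Pi.algebraMap ι R K '' (Subtype.val '' B)) := by
    refine span_le.mpr (Set.image_subset_iff.mpr fun y hy ↦ ?_)
    by_cases hyB : (⟨y, hy⟩ : S) ∈ B
    · exact subset_span ⟨y, ⟨_, hyB, rfl⟩, rfl⟩
    · obtain ⟨a, ha, hay⟩ := hBmax _ hyB
      exact algebraMap_mem_span_of_smul_mem_span ha hay
  obtain ⟨a, ha, ham⟩ := exists_smul_mem_span_of_algebraMap_mem_span hB.id_image (hS hm)
  exact ⟨a, ha, span_le.mpr (by rintro _ ⟨y, -, rfl⟩; exact y.2) ham⟩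

end ExtensionOfScalars

theorem intCastHom_eq_pi_algebraMap (n : ℕ) :
    ⇑(intCastHom n) = Pi.algebraMap (Fin n) ℤ ℝ := by
  funext m i
  simp [intCastHom, Pi.algebraMap]

theorem exists_zsmul_mem_of_intCastHom_mem_span {n : ℕ} (S : AddSubgroup (Fin n → ℤ))
    {m : Fin n → ℤ} (hm : intCastHom n m ∈ span ℝ (intCastHom n '' S)) :
    ∃ a : ℤ, a ≠ 0 ∧ a • m ∈ S := by
  rw [intCastHom_eq_pi_algebraMap] at hm
  exact exists_smul_mem_of_algebraMap_mem_span (AddSubgroup.toIntSubmodule S) hm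

theorem IsRationalSubspace.le_span_of_latticePoints_le {n : ℕ} {L : Submodule ℝ (Fin n → ℝ)}
    (hL : IsRationalSubspace L) {S : AddSubgroup (Fin n → ℤ)} (h : latticePoints L ≤ S) :
    L ≤ span ℝ (intCastHom n '' S) := by
  rw [hL]
  exact span_mono (Set.image_mono h)

theorem AddMonoid.IsTorsionFree.mem_of_zsmul_mem {G : Type*} [AddCommGroup G]
    {S : AddSubgroup G} (hS : AddMonoid.IsTorsionFree (G ⧸ S)) {a : ℤ} (ha : a ≠ 0) {g : G}
    (hg : a • g ∈ S) : g ∈ S := by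
  by_contra hgS
  refine hS _ ((QuotientAddGroup.eq_zero_iff g).not.mpr hgS) ?_
  refine isOfFinAddOrder_iff_zsmul_eq_zero.mpr ⟨a, ha, ?_⟩
  rwa [← QuotientAddGroup.mk_zsmul, QuotientAddGroup.eq_zero_iff]

theorem integer_point_of_mutually_pure
    (n : ℕ) (L L' : Submodule ℝ (Fin n → ℝ))
    (hL : IsRationalSubspace L) (hL' : IsRationalSubspace L')
    (hpure : AddMonoid.IsTorsionFree
      ((Fin n → ℤ) ⧸ (latticePoints L ⊔ latticePoints L')))
    (m : Fin n → ℤ)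
    (hne : ∃ v : Fin n → ℝ, v ∈ L ∧ v - intCastHom n m ∈ L') :
    ∃ z : Fin n → ℤ, (intCastHom n z : Fin n → ℝ) ∈ L ∧
      intCastHom n z - intCastHom n m ∈ L' := by
  obtain ⟨v, hvL, hvL'⟩ := hne
  have hm :
      intCastHom n m ∈ span ℝ (intCastHom n '' ↑(latticePoints L ⊔ latticePoints L')) := by
    rw [← sub_sub_cancel v (intCastHom n m)]
    exact sub_mem (hL.le_span_of_latticePoints_le le_sup_left hvL)
      (hL'.le_span_of_latticePoints_le le_sup_right hvL')
  obtain ⟨a, ha, ham⟩ := exists_zsmul_mem_of_intCastHom_mem_span _ hm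
  obtain ⟨z, hz, w, hw, rfl⟩ := AddSubgroup.mem_sup.mp (hpure.mem_of_zsmul_mem ha ham)
  refine ⟨z, hz, ?_⟩
  rw [map_add, sub_add_cancel_left]
  exact neg_mem hw
end

section
/- The set of vectors 𝔸_n = {0} ∪ {±e_i : 1 ≤ i ≤ n} ∪ {e_i - e_j : i ≠ j} in ℤⁿ is a maximal unimodular system: for any integer vector r ∉ 𝔸_n, the set 𝔸_n ∪ {r} is not unimodular. In particular, if 𝔸_n ∪ {r} is unimodular, then every coordinate of r lies in {0, ±1} and at most two coordinates are nonzero, with opposite signs. -/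
/-- A set of integer vectors is unimodular if every subset generates a pure subgroup. -/
def Unimodular {n : ℕ} (R : Set (Fin n → ℤ)) : Prop :=
  ∀ B ⊆ R, ∀ g : (Fin n → ℤ) ⧸ AddSubgroup.closure B, g ≠ 0 → ¬IsOfFinAddOrder g

/-- The unimodular system `𝔸ₙ = {0} ∪ {±eᵢ} ∪ {eᵢ - eⱼ : i ≠ j}`. -/
def systemA (n : ℕ) : Set (Fin n → ℤ) :=
  {0} ∪ {v | ∃ i, v = Pi.single i 1 ∨ v = -Pi.single i 1} ∪
    {v | ∃ i j, i ≠ j ∧ v = Pi.single i 1 - Pi.single j 1}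

/-!
Unimodularity is purity: if `B ⊆ ℛ` and `m • v ∈ ℤB`
with `m ≠ 0`, then `v ∈ ℤB`. If `|rᵢ| ≥ 2`, take `B = {r} ∪ {eₖ : k ≠ i}`: clearing the other
coordinates of `r` puts `rᵢ • eᵢ` in `ℤB`, yet `rᵢ` divides the `i`-th coordinate of every element
of `ℤB`, so `eᵢ ∉ ℤB`. If `rᵢ = rⱼ = ±1` with `i ≠ j`, take `B = {r, eᵢ - eⱼ} ∪ {eₖ : k ≠ i, j}`:
now `ℤB` contains `rᵢ • (eᵢ + eⱼ)`, hence `2rᵢ • eᵢ`, yet `vᵢ + vⱼ` is even on `ℤB`. A vector with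
entries in `{0, ±1}` whose nonzero entries have pairwise product `-1` lies in `𝔸ₙ`.
-/

theorem Unimodular.mem_closure_of_zsmul_mem {n : ℕ} {R B : Set (Fin n → ℤ)} (hR : Unimodular R)
    (hB : B ⊆ R) {m : ℤ} (hm : m ≠ 0) {v : Fin n → ℤ} (hv : m • v ∈ AddSubgroup.closure B) :
    v ∈ AddSubgroup.closure B := by
  by_contra hv'
  refine hR B hB v (by rwa [ne_eq, QuotientAddGroup.eq_zero_iff]) ?_
  rw [isOfFinAddOrder_iff_zsmul_eq_zero]
  exact ⟨m, hm, by rwa [← QuotientAddGroup.mk_zsmul, QuotientAddGroup.eq_zero_iff]⟩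

namespace AddSubgroup

theorem dvd_of_mem_closure {G : Type*} [AddGroup G] {B : Set G} (f : G →+ ℤ) {m : ℤ}
    (hB : ∀ b ∈ B, m ∣ f b) {v : G} (hv : v ∈ closure B) : m ∣ f v := by
  induction hv using closure_induction with
  | mem b hb => exact hB b hb
  | zero => simp
  | add _ _ _ _ hx hy => simpa using dvd_add hx hy
  | neg _ _ hx => simpa using hx

theorem indicator_mem {ι : Type*} [Fintype ι] [DecidableEq ι] {H : AddSubgroup (ι → ℤ)}
    {S : Set ι} (hS : ∀ k ∉ S, Pi.single k 1 ∈ H) {v : ι → ℤ} (hv : v ∈ H) :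
    S.indicator v ∈ H := by
  have hcompl : Sᶜ.indicator v ∈ H := by
    rw [← Finset.univ_sum_single (Sᶜ.indicator v)]
    refine H.sum_mem fun k _ => ?_
    by_cases hk : k ∈ S
    · simp [hk]
    · simpa [hk, ← Pi.single_smul'] using H.zsmul_mem (hS k hk) (v k)
  simpa [Set.indicator_compl] using H.sub_mem hv hcompl

end AddSubgroup

theorem single_mem_systemA {n : ℕ} (k : Fin n) : Pi.single k 1 ∈ systemA n :=
  Or.inl (Or.inr ⟨k, Or.inl rfl⟩)

namespace Unimodular

variable {n : ℕ} {r : Fin n → ℤ}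

theorem apply_eq_zero_or_eq_one_or_eq_neg_one (h : Unimodular (insert r (systemA n))) (i : Fin n) :
    r i = 0 ∨ r i = 1 ∨ r i = -1 := by
  rcases eq_or_ne (r i) 0 with hri | hri
  · exact Or.inl hri
  set B := insert r ((fun k => Pi.single k (1 : ℤ)) '' {i}ᶜ)
  have hB : B ⊆ insert r (systemA n) :=
    Set.insert_subset_insert (by rintro _ ⟨k, -, rfl⟩; exact single_mem_systemA k)
  have hri_ei : r i • Pi.single i 1 ∈ AddSubgroup.closure B := by
    have := AddSubgroup.indicator_mem (H := AddSubgroup.closure B) (S := {i})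
      (fun k hk => AddSubgroup.subset_closure (Set.mem_insert_of_mem r ⟨k, hk, rfl⟩))
      (AddSubgroup.subset_closure (Set.mem_insert r _))
    rwa [Set.indicator_singleton, ← mul_one (r i), ← smul_eq_mul, Pi.single_smul'] at this
  have hdvd : r i ∣ 1 := by
    have := AddSubgroup.dvd_of_mem_closure (Pi.evalAddMonoidHom (fun _ => ℤ) i) (m := r i)
      ?_ (h.mem_closure_of_zsmul_mem hB hri hri_ei)
    · simpa using this
    rintro _ (rfl | ⟨k, hk, rfl⟩)
    · simp
    · simp [show k ≠ i from hk]
  exact Or.inr (Int.isUnit_iff.mp (isUnit_of_dvd_one hdvd))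

theorem apply_mul_apply_eq_neg_one (h : Unimodular (insert r (systemA n))) {i j : Fin n}
    (hij : i ≠ j) (hi : r i ≠ 0) (hj : r j ≠ 0) : r i * r j = -1 := by
  by_contra hne
  have hrji : r j = r i := by
    rcases h.apply_eq_zero_or_eq_one_or_eq_neg_one i with h' | h' | h' <;>
    rcases h.apply_eq_zero_or_eq_one_or_eq_neg_one j with h'' | h'' | h'' <;>
    simp_all
  set B := insert r (insert (Pi.single i 1 - Pi.single j 1)
    ((fun k => Pi.single k (1 : ℤ)) '' ({i, j} : Set (Fin n))ᶜ))
  have hB : B ⊆ insert r (systemA n) :=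
    Set.insert_subset_insert (Set.insert_subset (Or.inr ⟨i, j, hij, rfl⟩)
      (by rintro _ ⟨k, -, rfl⟩; exact single_mem_systemA k))
  have hsum : r i • (Pi.single i 1 + Pi.single j 1) ∈ AddSubgroup.closure B := by
    have := AddSubgroup.indicator_mem (H := AddSubgroup.closure B) (S := {i, j})
      (fun k hk => AddSubgroup.subset_closure
        (Set.mem_insert_of_mem r (Set.mem_insert_of_mem _ ⟨k, hk, rfl⟩)))
      (AddSubgroup.subset_closure (Set.mem_insert r _))
    convert this using 1
    ext k
    by_cases hki : k = i <;> by_cases hkj : k = j <;> simp_all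
  have h2ei : (2 * r i) • Pi.single i 1 ∈ AddSubgroup.closure B := by
    have hdiff : Pi.single i 1 - Pi.single j 1 ∈ AddSubgroup.closure B :=
      AddSubgroup.subset_closure (Or.inr (Or.inl rfl))
    convert AddSubgroup.add_mem _ hsum (AddSubgroup.zsmul_mem _ hdiff (r i)) using 1
    module
  have hparity := AddSubgroup.dvd_of_mem_closure (m := 2)
    (Pi.evalAddMonoidHom (fun _ => ℤ) i + Pi.evalAddMonoidHom (fun _ => ℤ) j) ?_
    (h.mem_closure_of_zsmul_mem hB (by simpa using hi) h2ei)
  · simp [hij.symm] at hparity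
  rintro _ (rfl | rfl | ⟨k, hk, rfl⟩)
  · simp [hrji, ← two_mul]
  · simp [hij, hij.symm]
  · simp_all

end Unimodular

theorem mem_systemA_of_mul_apply_eq_neg_one {n : ℕ} {r : Fin n → ℤ}
    (hc : ∀ i, r i = 0 ∨ r i = 1 ∨ r i = -1)
    (hs : ∀ i j, i ≠ j → r i ≠ 0 → r j ≠ 0 → r i * r j = -1) : r ∈ systemA n := by
  by_cases hr : r = 0
  · exact Or.inl (Or.inl hr)
  obtain ⟨i, hi⟩ := Function.ne_iff.mp hr
  by_cases hsingle : ∀ k ≠ i, r k = 0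
  · refine Or.inl (Or.inr ⟨i, ?_⟩)
    rcases hc i with h | h | h
    · exact absurd h hi
    · left; ext k; by_cases hk : k = i <;> simp_all
    · right; ext k; by_cases hk : k = i <;> simp_all
  push Not at hsingle
  obtain ⟨j, hji, hj⟩ := hsingle
  have hzero : ∀ k, k ≠ i → k ≠ j → r k = 0 := by
    intro k hki hkj
    by_contra hk
    have hij := hs i j hji.symm hi hj
    have hik := hs i k hki.symm hi hk
    have hjk := hs j k hkj.symm hj hk
    rcases hc i with h | h | h <;> rcases hc j with h' | h' | h' <;> simp_all
  have hij := hs i j hji.symm hi hj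
  refine Or.inr ?_
  rcases hc i with h | h | h
  · exact absurd h hi
  · refine ⟨i, j, hji.symm, ?_⟩
    ext k; by_cases hki : k = i <;> by_cases hkj : k = j <;> simp_all
  · refine ⟨j, i, hji, ?_⟩
    ext k; by_cases hki : k = i <;> by_cases hkj : k = j <;> simp_all

theorem systemA_maximal_unimodular (n : ℕ) (r : Fin n → ℤ)
    (h : Unimodular (insert r (systemA n))) :
    r ∈ systemA n ∧ (∀ i, r i = 0 ∨ r i = 1 ∨ r i = -1) ∧
      (∀ i j, i ≠ j → r i ≠ 0 → r j ≠ 0 → r i * r j = -1) := by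
  have hc := h.apply_eq_zero_or_eq_one_or_eq_neg_one
  have hs : ∀ i j, i ≠ j → r i ≠ 0 → r j ≠ 0 → r i * r j = -1 :=
    fun _ _ hij => h.apply_mul_apply_eq_neg_one hij
  exact ⟨mem_systemA_of_mul_apply_eq_neg_one hc hs, hc, hs⟩
end

section
/- Let ℛ ⊆ ℤⁿ be a full-dimensional unimodular set and let ξ : ℤⁿ → ℤ be a surjective homomorphism whose kernel is generated (over ℝ) by elements of ℛ (i.e., ker ξ ⊗ ℝ is an ℛ-flat). Then |ξ(r)| ≤ 1 for every r ∈ ℛ, i.e., every crossing is a co-root. -/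
variable {n : ℕ}

def realExtension (φ : (Fin n → ℤ) →+ ℤ) : (Fin n → ℝ) →ₗ[ℝ] ℝ :=
  Fintype.linearCombination ℝ fun i => (φ (Pi.single i 1) : ℝ)

theorem realExtension_intCast (φ : (Fin n → ℤ) →+ ℤ) (m : Fin n → ℤ) :
    realExtension φ (intCast m) = φ m := by
  rw [realExtension, Fintype.linearCombination_apply]
  conv_rhs => rw [← Finset.univ_sum_single m, map_sum, Int.cast_sum]
  refine Finset.sum_congr rfl fun i _ => ?_
  rw [← mul_one (m i), ← smul_eq_mul, Pi.single_smul', map_zsmul]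
  simp [intCast]

theorem eq_zero_of_intCast_mem_span {φ : (Fin n → ℤ) →+ ℤ} {S : Set (Fin n → ℤ)}
    (hφ : ∀ s ∈ S, φ s = 0) {y : Fin n → ℤ}
    (hy : intCast y ∈ Submodule.span ℝ (intCast '' S)) : φ y = 0 := by
  have hle : Submodule.span ℝ (intCast '' S) ≤ LinearMap.ker (realExtension φ) := by
    rw [Submodule.span_le]
    rintro _ ⟨s, hs, rfl⟩
    simp [realExtension_intCast, hφ s hs]
  exact_mod_cast (realExtension_intCast φ y).symm.trans (hle hy)

theorem intCast_mem_span_insert {ξ : (Fin n → ℤ) →+ ℤ} {B : Set (Fin n → ℤ)}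
    (hB : Submodule.span ℝ (intCast '' B) =
      Submodule.span ℝ (intCast '' {m : Fin n → ℤ | ξ m = 0}))
    {r x : Fin n → ℤ} (hr : ξ r ≠ 0) (hx : ξ x = 1) :
    intCast x ∈ Submodule.span ℝ (intCast '' insert r B) := by
  have hdecomp : (ξ r : ℝ) • intCast x = intCast (ξ r • x - r) + intCast r := by
    ext i; simp [intCast]
  have hker : intCast (ξ r • x - r) ∈ Submodule.span ℝ (intCast '' B) := by
    rw [hB]
    refine Submodule.subset_span ⟨_, ?_, rfl⟩
    rw [Set.mem_ofPred_eq, map_sub, map_zsmul, hx, smul_eq_mul, mul_one, sub_self]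
  refine (Submodule.smul_mem_iff _ ((Int.cast_ne_zero (α := ℝ)).mpr hr)).mp ?_
  rw [hdecomp]
  exact add_mem (Submodule.span_mono (Set.image_mono (Set.subset_insert r B)) hker)
    (Submodule.subset_span ⟨r, Set.mem_insert r B, rfl⟩)

theorem mem_closure_of_intCast_mem_span {S : Set (Fin n → ℤ)}
    (hS : ∀ g : (Fin n → ℤ) ⧸ AddSubgroup.closure S, g ≠ 0 → ¬IsOfFinAddOrder g)
    {y : Fin n → ℤ} (hy : intCast y ∈ Submodule.span ℝ (intCast '' S)) :
    y ∈ AddSubgroup.closure S := by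
  have : IsAddTorsionFree ((Fin n → ℤ) ⧸ AddSubgroup.closure S) :=
    IsAddTorsionFree.of_not_isOfFinAddOrder hS
  by_contra hyS
  have hy0 : (y : (Fin n → ℤ) ⧸ AddSubgroup.closure S) ≠ 0 := by
    rwa [Ne, QuotientAddGroup.eq_zero_iff]
  -- the quotient is finitely generated and torsion-free, hence free
  obtain ⟨ψ, hψ⟩ := Module.Projective.exists_dual_ne_zero ℤ hy0
  refine hψ (eq_zero_of_intCast_mem_span (φ := ψ.toAddMonoidHom.comp (QuotientAddGroup.mk' _))
    (fun s hs => ?_) hy)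
  simp [(QuotientAddGroup.eq_zero_iff s).mpr (AddSubgroup.subset_closure hs)]

theorem dvd_apply_of_mem_closure {G : Type*} [AddGroup G] (φ : G →+ ℤ) {S : Set G} {c : ℤ}
    (hS : ∀ s ∈ S, c ∣ φ s) {y : G} (hy : y ∈ AddSubgroup.closure S) : c ∣ φ y :=
  Int.mem_zmultiples_iff.mp <|
    (AddSubgroup.closure_le ((AddSubgroup.zmultiples c).comap φ)).mpr
      (fun s hs => Int.mem_zmultiples_iff.mpr (hS s hs)) hy

theorem crossing_is_coroot_general
    (n : ℕ) (R : Set (Fin n → ℤ))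
    (hR : Unimodular R)
    (ξ : (Fin n → ℤ) →+ ℤ)
    (hsurj : Function.Surjective ξ)
    (hker : ∃ B ⊆ R, Submodule.span ℝ (intCast '' B) =
      Submodule.span ℝ (intCast '' {m : Fin n → ℤ | ξ m = 0})) :
    ∀ r ∈ R, |ξ r| ≤ 1 := by
  obtain ⟨B, hBR, hBspan⟩ := hker
  intro r hr
  rcases eq_or_ne (ξ r) 0 with hr0 | hr0
  · simp [hr0]
  obtain ⟨x, hx⟩ := hsurj 1
  have hξB : ∀ b ∈ B, ξ b = 0 := fun b hb =>
    eq_zero_of_intCast_mem_span (fun _ hm => hm) (hBspan ▸ Submodule.subset_span ⟨b, hb, rfl⟩)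
  have hxB : x ∈ AddSubgroup.closure (insert r B) :=
    mem_closure_of_intCast_mem_span (hR _ (Set.insert_subset hr hBR))
      (intCast_mem_span_insert hBspan hr0 hx)
  have hdvd : ξ r ∣ 1 := by
    refine hx ▸ dvd_apply_of_mem_closure ξ (fun s hs => ?_) hxB
    rcases hs with rfl | hsB
    · exact dvd_rfl
    · simp [hξB s hsB]
  exact (Int.isUnit_iff_abs_eq.mp (isUnit_of_dvd_one hdvd)).le

theorem crossing_is_coroot
    (n : ℕ) (R : Set (Fin n → ℤ))
    (hR : Unimodular R)
    (hfull : Submodule.span ℝ (intCast '' R) = ⊤)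
    (ξ : (Fin n → ℤ) →+ ℤ)
    (hsurj : Function.Surjective ξ)
    (hker : ∃ B ⊆ R, Submodule.span ℝ (intCast '' B) =
      Submodule.span ℝ (intCast '' {m : Fin n → ℤ | ξ m = 0})) :
    ∀ r ∈ R, |ξ r| ≤ 1 :=
  crossing_is_coroot_general n R hR ξ hsurj hker
end

section
/- Let b : 2^N → ℝ be a submodular function on a finite set N. Define f : ℝ^N → ℝ as the unique function that is positively homogeneous, compatible with the fan whose cones are the sets of monotone functions for weak orders on N, and satisfies f(𝟙_S) = b(S) for all S ⊆ N (the Choquet integral / Lovász extension of b). Then f is convex; moreover for any S, T ⊆ N, b(S) + b(T) ≥ b(S ∪ T) + b(S ∩ T) follows from convexity of f combined with f(𝟙_{S∩T}) + f(𝟙_{S∪T}) = 2 f((𝟙_S + 𝟙_T)/2). -/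
/-- Two vectors are comonotone iff they are monotone w.r.t. a common weak order,
i.e. lie in a common cone of the order fan. -/
def Comonotone {N : Type*} (p q : N → ℝ) : Prop :=
  ∀ i j, p i < p j → q i ≤ q j

/-- Auxiliary "greedy" linear functional: given an accumulator set `A` and a list `l`
of remaining elements, sum `p i * (b (insert i A) - b A)` along the list. -/
def Lov {N : Type*} (b : Set N → ℝ) : Set N → List N → (N → ℝ) → ℝ
  | _, [], _ => 0
  | A, i :: t, p => p i * (b (insert i A) - b A) + Lov b (insert i A) t p

theorem lovasz_extension_convex
    (N : Type*) [Fintype N]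
    (b : Set N → ℝ)
    (hb : ∀ S T : Set N, b S + b T ≥ b (S ∪ T) + b (S ∩ T))
    (f : (N → ℝ) → ℝ)
    (hhomog : ∀ c : ℝ, 0 ≤ c → ∀ p, f (c • p) = c * f p)
    (hcompat : ∀ p q : N → ℝ, Comonotone p q → f (p + q) = f p + f q)
    (hind : ∀ S : Set N, f (S.indicator fun _ => (1 : ℝ)) = b S) :
    ConvexOn ℝ Set.univ f ∧
      ∀ S T : Set N,
        (f ((S ∩ T).indicator fun _ => (1 : ℝ)) + f ((S ∪ T).indicator fun _ => (1 : ℝ))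
            = 2 * f ((2 : ℝ)⁻¹ •
                ((S.indicator fun _ => (1 : ℝ)) + (T.indicator fun _ => (1 : ℝ))))) ∧
          b S + b T ≥ b (S ∪ T) + b (S ∩ T) := by
  classical
  -- basic consequences of the axioms
  have hzero : f 0 = 0 := by
    have h := hhomog 0 le_rfl 0
    simpa using h
  have hbempty : b ∅ = 0 := by
    have h := hind ∅
    rw [Set.indicator_empty] at h
    have h0 : f (fun _ => (0 : ℝ)) = 0 := hzero
    rw [h0] at h
    exact h.symm
  have hconst : ∀ t : ℝ, 0 ≤ t → f (fun _ => t) = t * b Set.univ := by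
    intro t ht
    have h1 := hind Set.univ
    rw [Set.indicator_univ] at h1
    have h2 := hhomog t ht (fun _ => (1 : ℝ))
    have h3 : (t • fun (_ : N) => (1 : ℝ)) = fun _ => t := by
      funext x; simp
    rw [h3] at h2
    rw [h2, h1]
  have hshift0 : ∀ (q : N → ℝ) (t : ℝ), 0 ≤ t →
      f (fun x => q x + t) = f q + t * b Set.univ := by
    intro q t ht
    have hc : Comonotone q (fun _ => t) := fun i j _ => le_rfl
    have h := hcompat q (fun _ => t) hc
    have e : (q + fun _ => t) = (fun x => q x + t) := rfl
    rw [e] at h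
    rw [h, hconst t ht]
  have hshift : ∀ (q : N → ℝ) (t : ℝ),
      f (fun x => q x + t) = f q + t * b Set.univ := by
    intro q t
    rcases le_or_gt 0 t with ht | ht
    · exact hshift0 q t ht
    · have h2 := hshift0 (fun x => q x + t) (-t) (by linarith)
      have e : (fun x => (q x + t) + -t) = q := by funext x; ring
      rw [e] at h2
      linarith
  -- Lov basic lemmas
  have Lov_congr : ∀ (l : List N) (A : Set N) (u v : N → ℝ),
      (∀ x ∈ l, u x = v x) → Lov b A l u = Lov b A l v := by
    intro l
    induction l with
    | nil => intro A u v _; rfl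
    | cons i t ih =>
      intro A u v h
      simp only [Lov]
      rw [h i (by simp), ih (insert i A) u v (fun x hx => h x (by simp [hx]))]
  have Lov_add : ∀ (l : List N) (A : Set N) (u v : N → ℝ),
      Lov b A l (u + v) = Lov b A l u + Lov b A l v := by
    intro l
    induction l with
    | nil => intro A u v; simp [Lov]
    | cons i t ih =>
      intro A u v
      simp only [Lov, Pi.add_apply, ih]
      ring
  -- Lemma A: value of f on sorted nonnegative vectors
  have lemA : ∀ (l : List N) (A : Set N) (m : ℝ) (p : N → ℝ),
      l.Nodup → (∀ x ∈ l, x ∉ A) → (∀ x, x ∈ A ∨ x ∈ l) →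
      l.Pairwise (fun a c => p c ≤ p a) →
      (∀ a ∈ A, p a = m) → (∀ x ∈ l, p x ≤ m) → (∀ x, 0 ≤ p x) → 0 ≤ m →
      f p = m * b A + Lov b A l p := by
    intro l
    induction l with
    | nil =>
      intro A m p _ _ hcov _ hA _ _ hm
      have hAuniv : A = Set.univ := by
        ext x
        simp only [Set.mem_univ, iff_true]
        rcases hcov x with h | h
        · exact h
        · simp at h
      subst hAuniv
      have hp : p = m • Set.indicator Set.univ (fun _ => (1 : ℝ)) := by
        rw [Set.indicator_univ]
        funext x
        simp [hA x (Set.mem_univ x)]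
      rw [hp, hhomog m hm, hind]
      simp [Lov]
    | cons i t ih =>
      intro A m p hnd hdis hcov hsort hA hle hpos hm
      have hiA : i ∉ A := hdis i (by simp)
      have him : p i ≤ m := hle i (by simp)
      have hm'0 : 0 ≤ p i := hpos i
      have hts : ∀ x ∈ t, p x ≤ p i := (List.pairwise_cons.mp hsort).1
      have hit : i ∉ t := (List.nodup_cons.mp hnd).1
      have hndt : t.Nodup := (List.nodup_cons.mp hnd).2
      set p' : N → ℝ := fun x => if x ∈ A then p i else p x with hp'def
      have hp'mem : ∀ x ∈ A, p' x = p i := fun x hx => if_pos hx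
      have hp'not : ∀ x, x ∉ A → p' x = p x := fun x hx => if_neg hx
      have hdecomp : p = ((m - p i) • Set.indicator A (fun _ => (1 : ℝ))) + p' := by
        funext x
        by_cases hx : x ∈ A
        · simp only [Pi.add_apply, Pi.smul_apply, smul_eq_mul,
            Set.indicator_of_mem hx, hp'mem x hx, hA x hx]
          ring
        · simp only [Pi.add_apply, Pi.smul_apply, smul_eq_mul,
            Set.indicator_of_notMem hx, hp'not x hx]
          ring
      have hcomo : Comonotone ((m - p i) • Set.indicator A (fun _ => (1 : ℝ))) p' := by
        intro u v huv
        simp only [Pi.smul_apply, smul_eq_mul] at huv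
        by_cases hvA : v ∈ A
        · rw [hp'mem v hvA]
          by_cases huA : u ∈ A
          · rw [hp'mem u huA]
          · rw [hp'not u huA]
            rcases hcov u with h | h
            · exact absurd h huA
            · rcases List.mem_cons.mp h with rfl | h
              · exact le_rfl
              · exact hts u h
        · exfalso
          rw [Set.indicator_of_notMem hvA] at huv
          have h1 : (0 : ℝ) ≤ (m - p i) * Set.indicator A (fun _ => (1 : ℝ)) u :=
            mul_nonneg (by linarith) (Set.indicator_nonneg (fun _ _ => zero_le_one) u)
          simp only [mul_zero] at huv
          linarith
      have hmain : f p = f ((m - p i) • Set.indicator A (fun _ => (1 : ℝ))) + f p' := by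
        have h := hcompat _ _ hcomo
        rw [← hdecomp] at h
        exact h
      have hfc : f ((m - p i) • Set.indicator A (fun _ => (1 : ℝ))) = (m - p i) * b A := by
        rw [hhomog (m - p i) (by linarith), hind]
      have hIH : f p' = p i * b (insert i A) + Lov b (insert i A) t p' := by
        apply ih (insert i A) (p i) p' hndt
        · intro x hx
          simp only [Set.mem_insert_iff, not_or]
          exact ⟨fun h => hit (h ▸ hx), hdis x (by simp [hx])⟩
        · intro x
          rcases hcov x with h | h
          · exact Or.inl (Set.mem_insert_of_mem i h)
          · rcases List.mem_cons.mp h with rfl | h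
            · exact Or.inl (Set.mem_insert x A)
            · exact Or.inr h
        · have hsort' := (List.pairwise_cons.mp hsort).2
          refine List.Pairwise.imp_of_mem ?_ hsort'
          intro a c ha hc h
          rw [hp'not a (hdis a (by simp [ha])), hp'not c (hdis c (by simp [hc]))]
          exact h
        · intro a ha
          rcases Set.mem_insert_iff.mp ha with rfl | ha
          · exact hp'not _ hiA
          · exact hp'mem a ha
        · intro x hx
          rw [hp'not x (hdis x (by simp [hx]))]
          exact hts x hx
        · intro x
          by_cases hx : x ∈ A
          · rw [hp'mem x hx]; exact hm'0
          · rw [hp'not x hx]; exact hpos x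
        · exact hm'0
      have hLp : Lov b (insert i A) t p' = Lov b (insert i A) t p :=
        Lov_congr t _ p' p (fun x hx => hp'not x (hdis x (by simp [hx])))
      simp only [Lov]
      rw [hmain, hfc, hIH, hLp]
      ring
  -- Claim A: f equals Lov on sorted nonnegative vectors
  have claimA : ∀ (l : List N) (p : N → ℝ), l.Nodup → (∀ x, x ∈ l) →
      l.Pairwise (fun a c => p c ≤ p a) → (∀ x, 0 ≤ p x) → f p = Lov b ∅ l p := by
    intro l p hnd hcov hsort hpos
    have hm : ∀ x ∈ l, p x ≤ (∑ y, |p y|) + 1 := by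
      intro x _
      have h1 : |p x| ≤ ∑ y, |p y| :=
        Finset.single_le_sum (fun y _ => abs_nonneg (p y)) (Finset.mem_univ x)
      have h2 := le_abs_self (p x)
      linarith
    have hmn : (0 : ℝ) ≤ (∑ y, |p y|) + 1 := by
      have : (0 : ℝ) ≤ ∑ y, |p y| := Finset.sum_nonneg fun y _ => abs_nonneg (p y)
      linarith
    have h := lemA l ∅ ((∑ y, |p y|) + 1) p hnd (by simp) (fun x => Or.inr (hcov x))
      hsort (by simp) hm hpos hmn
    rw [hbempty] at h
    linarith
  -- swap lemma (uses submodularity)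
  have Lswap : ∀ (A : Set N) (x y : N) (t : List N) (p : N → ℝ), x ≠ y → x ∉ A → y ∉ A →
      p x ≤ p y → Lov b A (x :: y :: t) p ≤ Lov b A (y :: x :: t) p := by
    intro A x y t p hxy hxA hyA hpxy
    have hins : insert y (insert x A) = insert x (insert y A) := Set.insert_comm y x A
    have hsub := hb (insert x A) (insert y A)
    have hU : insert x A ∪ insert y A = insert x (insert y A) := by
      ext z; simp only [Set.mem_union, Set.mem_insert_iff]; tauto
    have hI : insert x A ∩ insert y A = A := by
      ext z
      simp only [Set.mem_inter_iff, Set.mem_insert_iff]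
      constructor
      · rintro ⟨h1 | h1, h2 | h2⟩
        · exact absurd (h1.symm.trans h2) hxy
        · exact h2
        · exact h1
        · exact h1
      · exact fun h => ⟨Or.inr h, Or.inr h⟩
    rw [hU, hI] at hsub
    simp only [Lov, hins]
    have key : 0 ≤ (p y - p x) *
        ((b (insert x A) + b (insert y A)) - (b (insert x (insert y A)) + b A)) :=
      mul_nonneg (by linarith) (by linarith)
    nlinarith [key]
  -- ordered-insert lemma
  have Lins : ∀ (p : N → ℝ) (l : List N) (x : N) (A : Set N),
      l.Pairwise (fun a c => p c ≤ p a) → x ∉ l → (∀ y ∈ l, y ∉ A) → x ∉ A → l.Nodup →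
      Lov b A (x :: l) p ≤ Lov b A (List.orderedInsert (fun a c => p c ≤ p a) x l) p := by
    intro p l
    induction l with
    | nil => intro x A _ _ _ _ _; simp [List.orderedInsert]
    | cons y t ih =>
      intro x A hsort hxl hlA hxA hnd
      by_cases hr : p y ≤ p x
      · simp [List.orderedInsert, hr]
      · push_neg at hr
        have hxy : x ≠ y := by
          intro h; exact hxl (by simp [h])
        have h1 : Lov b A (x :: y :: t) p ≤ Lov b A (y :: x :: t) p :=
          Lswap A x y t p hxy hxA (hlA y (by simp)) hr.le
        have h2 : Lov b (insert y A) (x :: t) p ≤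
            Lov b (insert y A) (List.orderedInsert (fun a c => p c ≤ p a) x t) p := by
          apply ih x (insert y A) (List.pairwise_cons.mp hsort).2
          · intro h; exact hxl (by simp [h])
          · intro z hz
            simp only [Set.mem_insert_iff, not_or]
            exact ⟨fun h => (List.nodup_cons.mp hnd).1 (h ▸ hz), hlA z (by simp [hz])⟩
          · simp only [Set.mem_insert_iff, not_or]
            exact ⟨hxy, hxA⟩
          · exact (List.nodup_cons.mp hnd).2
        rw [List.orderedInsert, if_neg (not_le.mpr hr)]
        refine le_trans h1 ?_
        simp only [Lov] at h2 ⊢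
        linarith
  -- sorting lemma
  have Lsort : ∀ (p : N → ℝ) (l : List N) (A : Set N), l.Nodup → (∀ y ∈ l, y ∉ A) →
      Lov b A l p ≤ Lov b A (List.insertionSort (fun a c => p c ≤ p a) l) p := by
    intro p l
    haveI : IsTotal N (fun a c => p c ≤ p a) := ⟨fun a c => le_total (p c) (p a)⟩
    haveI : IsTrans N (fun a c => p c ≤ p a) := ⟨fun a c d h1 h2 => le_trans h2 h1⟩
    induction l with
    | nil => intro A _ _; simp [List.insertionSort]
    | cons x t ih =>
      intro A hnd hlA
      have hperm := List.perm_insertionSort (fun a c => p c ≤ p a) t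
      have hnds : (List.insertionSort (fun a c => p c ≤ p a) t).Nodup :=
        hperm.nodup_iff.mpr (List.nodup_cons.mp hnd).2
      have step1 : Lov b (insert x A) t p ≤
          Lov b (insert x A) (List.insertionSort (fun a c => p c ≤ p a) t) p := by
        apply ih (insert x A) (List.nodup_cons.mp hnd).2
        intro y hy
        simp only [Set.mem_insert_iff, not_or]
        exact ⟨fun h => (List.nodup_cons.mp hnd).1 (h ▸ hy), hlA y (by simp [hy])⟩
      have step2 : Lov b A (x :: List.insertionSort (fun a c => p c ≤ p a) t) p ≤
          Lov b A (List.orderedInsert (fun a c => p c ≤ p a) x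
            (List.insertionSort (fun a c => p c ≤ p a) t)) p := by
        apply Lins p _ x A (List.pairwise_insertionSort _ t)
        · intro h
          exact (List.nodup_cons.mp hnd).1 (hperm.mem_iff.mp h)
        · intro y hy
          exact hlA y (by simp [hperm.mem_iff.mp hy])
        · exact hlA x (by simp)
        · exact hnds
      calc Lov b A (x :: t) p
          = p x * (b (insert x A) - b A) + Lov b (insert x A) t p := rfl
        _ ≤ p x * (b (insert x A) - b A) +
            Lov b (insert x A) (List.insertionSort (fun a c => p c ≤ p a) t) p := by
            linarith
        _ = Lov b A (x :: List.insertionSort (fun a c => p c ≤ p a) t) p := rfl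
        _ ≤ Lov b A (List.orderedInsert (fun a c => p c ≤ p a) x
            (List.insertionSort (fun a c => p c ≤ p a) t)) p := step2
        _ = Lov b A (List.insertionSort (fun a c => p c ≤ p a) (x :: t)) p := rfl
  -- Claim B: Lov along any order is at most f, for nonnegative vectors
  have claimB : ∀ (p : N → ℝ) (l : List N), l.Nodup → (∀ x, x ∈ l) → (∀ x, 0 ≤ p x) →
      Lov b ∅ l p ≤ f p := by
    intro p l hnd hcov hpos
    haveI : IsTotal N (fun a c => p c ≤ p a) := ⟨fun a c => le_total (p c) (p a)⟩
    haveI : IsTrans N (fun a c => p c ≤ p a) := ⟨fun a c d h1 h2 => le_trans h2 h1⟩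
    have hperm := List.perm_insertionSort (fun a c => p c ≤ p a) l
    have h1 : Lov b ∅ l p ≤ Lov b ∅ (List.insertionSort (fun a c => p c ≤ p a) l) p :=
      Lsort p l ∅ hnd (by simp)
    have h2 : f p = Lov b ∅ (List.insertionSort (fun a c => p c ≤ p a) l) p :=
      claimA _ p (hperm.nodup_iff.mpr hnd) (fun x => hperm.mem_iff.mpr (hcov x))
        (List.pairwise_insertionSort _ l) hpos
    linarith
  -- subadditivity
  have subadd : ∀ p q : N → ℝ, f (p + q) ≤ f p + f q := by
    intro p q
    have hp1 : ∀ x, 0 ≤ p x + ∑ y, |p y| := by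
      intro x
      have h1 : |p x| ≤ ∑ y, |p y| :=
        Finset.single_le_sum (fun y _ => abs_nonneg (p y)) (Finset.mem_univ x)
      have h2 := neg_abs_le (p x)
      linarith
    have hq1 : ∀ x, 0 ≤ q x + ∑ y, |q y| := by
      intro x
      have h1 : |q x| ≤ ∑ y, |q y| :=
        Finset.single_le_sum (fun y _ => abs_nonneg (q y)) (Finset.mem_univ x)
      have h2 := neg_abs_le (q x)
      linarith
    set s := ∑ y, |p y| with hs
    set t := ∑ y, |q y| with ht
    set p₁ : N → ℝ := fun x => p x + s with hp₁
    set q₁ : N → ℝ := fun x => q x + t with hq₁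
    have hsum_pos : ∀ x, 0 ≤ (p₁ + q₁) x := fun x => add_nonneg (hp1 x) (hq1 x)
    set r : N → N → Prop := fun a c => (p₁ + q₁) c ≤ (p₁ + q₁) a with hr
    haveI : IsTotal N r := ⟨fun a c => le_total _ _⟩
    haveI : IsTrans N r := ⟨fun a c d h1 h2 => le_trans h2 h1⟩
    set l₀ : List N := Finset.univ.toList with hl₀
    have hnd₀ : l₀.Nodup := Finset.nodup_toList _
    have hcov₀ : ∀ x, x ∈ l₀ := fun x => by simp [hl₀]
    set l : List N := List.insertionSort r l₀ with hl
    have hperm := List.perm_insertionSort r l₀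
    have hnd : l.Nodup := hperm.nodup_iff.mpr hnd₀
    have hcov : ∀ x, x ∈ l := fun x => hperm.mem_iff.mpr (hcov₀ x)
    have hsort : l.Pairwise r := List.pairwise_insertionSort r l₀
    have h1 : f (p₁ + q₁) = Lov b ∅ l (p₁ + q₁) :=
      claimA l (p₁ + q₁) hnd hcov hsort hsum_pos
    have h2 : Lov b ∅ l (p₁ + q₁) = Lov b ∅ l p₁ + Lov b ∅ l q₁ := Lov_add l ∅ p₁ q₁
    have h3 : Lov b ∅ l p₁ ≤ f p₁ := claimB p₁ l hnd hcov hp1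
    have h4 : Lov b ∅ l q₁ ≤ f q₁ := claimB q₁ l hnd hcov hq1
    have h5 : f p₁ = f p + s * b Set.univ := hshift p s
    have h6 : f q₁ = f q + t * b Set.univ := hshift q t
    have h7 : f (p₁ + q₁) = f (p + q) + (s + t) * b Set.univ := by
      have e : (p₁ + q₁) = (fun x => (p + q) x + (s + t)) := by
        funext x
        simp only [Pi.add_apply, hp₁, hq₁]
        ring
      rw [e, hshift (p + q) (s + t)]
    linarith
  constructor
  · refine ⟨convex_univ, ?_⟩
    intro x _ y _ a c ha hc _
    have h1 : f (a • x + c • y) ≤ f (a • x) + f (c • y) := subadd _ _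
    rw [hhomog a ha x, hhomog c hc y] at h1
    simpa [smul_eq_mul] using h1
  · intro S T
    refine ⟨?_, hb S T⟩
    have hcm : Comonotone ((S ∩ T).indicator fun _ => (1 : ℝ))
        ((S ∪ T).indicator fun _ => (1 : ℝ)) := by
      intro i j hij
      have hj : j ∈ S ∩ T := by
        by_contra hj
        rw [Set.indicator_of_notMem hj] at hij
        have h0 : (0 : ℝ) ≤ (S ∩ T).indicator (fun _ => (1 : ℝ)) i :=
          Set.indicator_nonneg (fun _ _ => zero_le_one) i
        linarith
      have hj' : j ∈ S ∪ T := Or.inl hj.1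
      rw [Set.indicator_of_mem hj']
      by_cases hi : i ∈ S ∪ T <;> simp [hi]
    have hsum : (S.indicator fun _ => (1 : ℝ)) + (T.indicator fun _ => (1 : ℝ))
        = ((S ∩ T).indicator fun _ => (1 : ℝ)) + ((S ∪ T).indicator fun _ => (1 : ℝ)) := by
      funext x
      by_cases hS : x ∈ S <;> by_cases hT : x ∈ T <;>
        simp [Set.indicator_apply, hS, hT, Set.mem_inter_iff, Set.mem_union]
    have h2 : f (((S ∩ T).indicator fun _ => (1 : ℝ)) + ((S ∪ T).indicator fun _ => (1 : ℝ)))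
        = f ((S ∩ T).indicator fun _ => (1 : ℝ)) + f ((S ∪ T).indicator fun _ => (1 : ℝ)) :=
      hcompat _ _ hcm
    have h3 := hhomog (2⁻¹ : ℝ) (by norm_num)
      ((S.indicator fun _ => (1 : ℝ)) + (T.indicator fun _ => (1 : ℝ)))
    rw [h3, hsum, h2]
    ring
end
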